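/- For every integer β, the series Σ_{γ∈ℤ} D_3(γ) e^{h(β−γ)} converges absolutely and equals 0; i.e., the discrete convolution of D_3 with the discrete function β ↦ e^{hβ} is identically zero. -/

import Mathlib

/-- The polynomial `P_4(λ) = (1-e^{2h})(1-λ)⁴
  - 2(λ(e^{2h}+1) - e^h(λ²+1)) (h(1-λ)² + (h³/6)(λ²+4λ+1))`. -/
noncomputable def P4 (h x : ℝ) : ℝ :=
  (1 - Real.exp (2 * h)) * (1 - x) ^ 4 -
    2 * (x * (Real.exp (2 * h) + 1) - Real.exp h * (x ^ 2 + 1)) *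
      (h * (1 - x) ^ 2 + h ^ 3 / 6 * (x ^ 2 + 4 * x + 1))

/-!
Write `E = e^h`. Since `e^{h(β-γ)} = E^β (E⁻¹)^γ`, the claim is that the symbol `∑_γ D_3(γ) z^γ`
vanishes at `z = E⁻¹`. The two-sided geometric series
`∑_γ λ^{|γ|} z^γ = (1 - λ²) / ((1 - λz)(1 - λ/z))` (for `|λ| < |z| < |λ|⁻¹`) makes this symbol an
explicit rational function of `λ₁, λ₂, E`.

`P_4` is palindromic, so `P_4(x) = p (x - λ₁)(x - λ₁⁻¹)(x - λ₂)(x - λ₂⁻¹)`; this determines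
`p_3 = -p (λ₁ + λ₁⁻¹ + λ₂ + λ₂⁻¹)` and `P_4'(λ_k)`. In `A_k` the factor
`λ(E² + 1) - E(λ² + 1) = -(E - λ)(1 - λE)` cancels the poles of the geometric series at `z = E⁻¹`,
and the vanishing of the symbol reduces to the polynomial identity
`(1 - a)⁴ b² - (1 - b)⁴ a² = (a - b)(ab - 1)((a + b)(1 + ab) - 4ab)`.
-/

open Polynomial

section Quartic

variable {𝕜 : Type*} [NontriviallyNormedField 𝕜]

theorem iteratedDeriv_polynomial_eval (q : 𝕜[X]) (n : ℕ) :
    iteratedDeriv n (fun x => q.eval x) = fun x => (derivative^[n] q).eval x := by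
  induction n with
  | zero => simp
  | succ n ih =>
    ext x
    rw [iteratedDeriv_succ, ih, Polynomial.deriv, Function.iterate_succ_apply']

theorem iteratedDeriv_polynomial_eval_zero (q : 𝕜[X]) (n : ℕ) :
    iteratedDeriv n (fun x => q.eval x) 0 = n.factorial * q.coeff n := by
  simp only [iteratedDeriv_polynomial_eval]
  rw [← coeff_zero_eq_eval_zero, coeff_iterate_derivative, zero_add, Nat.descFactorial_self,
    nsmul_eq_mul]

theorem iteratedDeriv_three_quartic (p a b c d : 𝕜) :
    iteratedDeriv 3 (fun x => p * (x - a) * (x - b) * (x - c) * (x - d)) 0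
      = -6 * p * (a + b + c + d) := by
  have hpoly : (fun x => p * (x - a) * (x - b) * (x - c) * (x - d)) = fun x =>
      (C p * X ^ 4 - C (p * (a + b + c + d)) * X ^ 3
        + C (p * (a * b + a * c + a * d + b * c + b * d + c * d)) * X ^ 2
        - C (p * (a * b * c + a * b * d + a * c * d + b * c * d)) * X
        + C (p * (a * b * c * d))).eval x := by
    ext x; simp only [eval_add, eval_sub, eval_mul, eval_C, eval_pow, eval_X]; ring
  rw [hpoly, iteratedDeriv_polynomial_eval_zero]
  simp only [coeff_add, coeff_sub, coeff_C_mul, coeff_X_pow, coeff_X, coeff_C]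
  norm_num [Nat.factorial]
  ring

theorem deriv_quartic_at_root (p a b c d : 𝕜) :
    deriv (fun x => p * (x - a) * (x - b) * (x - c) * (x - d)) a
      = p * (a - b) * (a - c) * (a - d) := by
  have hpoly : (fun x => p * (x - a) * (x - b) * (x - c) * (x - d)) = fun x =>
      (C p * (X - C a) * (X - C b) * (X - C c) * (X - C d)).eval x := by
    ext x; simp
  rw [hpoly, Polynomial.deriv]
  simp

end Quartic

section Palindromic

variable {K : Type*} [Field K]

theorem add_inv_ne_add_inv {a b : K} (ha : a ≠ 0) (hb : b ≠ 0) (hab : a ≠ b) (hab₁ : a * b ≠ 1) :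
    a + a⁻¹ ≠ b + b⁻¹ := by
  intro h
  have hprod : (a - b) * (a * b - 1) = 0 := by
    field_simp at h
    linear_combination h
  rcases mul_eq_zero.1 hprod with h₁ | h₁
  · exact hab (sub_eq_zero.1 h₁)
  · exact hab₁ (sub_eq_zero.1 h₁)

theorem palindromic_quartic_eq_mul {a b c l m : K} (hl : l ≠ 0) (hm : m ≠ 0)
    (hlm : l + l⁻¹ ≠ m + m⁻¹)
    (hrl : a * l ^ 4 + b * l ^ 3 + c * l ^ 2 + b * l + a = 0)
    (hrm : a * m ^ 4 + b * m ^ 3 + c * m ^ 2 + b * m + a = 0) (x : K) :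
    a * x ^ 4 + b * x ^ 3 + c * x ^ 2 + b * x + a
      = a * (x - l) * (x - l⁻¹) * (x - m) * (x - m⁻¹) := by
  set s := l + l⁻¹
  set t := m + m⁻¹
  -- dividing by `l²`, a palindromic quartic becomes a quadratic in `l + l⁻¹`
  have hs : a * s ^ 2 + b * s + (c - 2 * a) = 0 := by
    simp only [s]; field_simp; linear_combination hrl
  have ht : a * t ^ 2 + b * t + (c - 2 * a) = 0 := by
    simp only [t]; field_simp; linear_combination hrm
  have hb : b = -a * (s + t) :=
    mul_left_cancel₀ (sub_ne_zero.mpr hlm) (by linear_combination hs - ht)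
  have hc : c = a * (2 + s * t) := by linear_combination hs - s * hb
  linear_combination (x ^ 3 + x) * hb + x ^ 2 * hc
    - a * (x ^ 2 - t * x + m * m⁻¹) * mul_inv_cancel₀ hl
    - a * (x ^ 2 - s * x + 1) * mul_inv_cancel₀ hm

end Palindromic

theorem P4_palindromic (h : ℝ) : ∃ b c : ℝ, ∀ x, P4 h x =
    ((1 - Real.exp (2 * h)) + 2 * Real.exp h * (h + h ^ 3 / 6)) * x ^ 4 + b * x ^ 3 + c * x ^ 2
      + b * x + ((1 - Real.exp (2 * h)) + 2 * Real.exp h * (h + h ^ 3 / 6)) :=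
  ⟨-4 * (1 - Real.exp (2 * h)) - 2 * (Real.exp (2 * h) + 1) * (h + h ^ 3 / 6)
      + 2 * Real.exp h * (2 * h ^ 3 / 3 - 2 * h),
    6 * (1 - Real.exp (2 * h)) + 4 * Real.exp h * (h + h ^ 3 / 6)
      - 2 * (Real.exp (2 * h) + 1) * (2 * h ^ 3 / 3 - 2 * h),
    fun x => by unfold P4; ring⟩

theorem P4_eq_mul {h p l m : ℝ} (hp : p = (1 - Real.exp (2 * h)) + 2 * Real.exp h * (h + h ^ 3 / 6))
    (hl : l ≠ 0) (hm : m ≠ 0) (hlm : l + l⁻¹ ≠ m + m⁻¹) (hrl : P4 h l = 0) (hrm : P4 h m = 0) :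
    P4 h = fun x => p * (x - l) * (x - l⁻¹) * (x - m) * (x - m⁻¹) := by
  obtain ⟨b, c, hP4⟩ := P4_palindromic h
  rw [← hp] at hP4
  rw [hP4] at hrl hrm
  funext x
  rw [hP4, palindromic_quartic_eq_mul hl hm hlm hrl hrm]

section Series

variable {𝕜 : Type*} [NormedField 𝕜]

theorem one_sub_ne_zero_of_norm_lt_one {x : 𝕜} (hx : ‖x‖ < 1) : 1 - x ≠ 0 := by
  rintro h
  rw [← sub_eq_zero.1 h, norm_one] at hx
  exact lt_irrefl _ hx

theorem hasSum_pow_natAbs_mul_zpow {l r : 𝕜} (hr : r ≠ 0) (hlr : ‖l * r‖ < 1) (hlr' : ‖l / r‖ < 1) :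
    HasSum (fun n : ℤ => l ^ n.natAbs * r ^ n) ((1 - l ^ 2) / ((1 - l * r) * (1 - l / r))) := by
  have hsum := HasSum.of_nat_of_neg_add_one (f := fun n : ℤ => l ^ n.natAbs * r ^ n)
    ((hasSum_geometric_of_norm_lt_one hlr).congr_fun fun n => by simp [mul_pow])
    (((hasSum_geometric_of_norm_lt_one hlr').mul_left (l / r)).congr_fun fun n => by
      rw [← Nat.cast_add_one, zpow_neg, zpow_natCast, Int.natAbs_neg, Int.natAbs_natCast, div_pow]
      ring)
  convert hsum using 1
  have h₁ := one_sub_ne_zero_of_norm_lt_one hlr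
  have h₂ : r - l ≠ 0 := fun h => one_sub_ne_zero_of_norm_lt_one hlr' (by
    rw [← sub_eq_zero.1 h, div_self hr, sub_self])
  field_simp
  ring

theorem hasSum_kernel_mul_zpow {p c₀ c₁ a₁ a₂ l₁ l₂ r : 𝕜} {D : ℤ → 𝕜} (hl₁ : l₁ ≠ 0)
    (hl₂ : l₂ ≠ 0) (hr : r ≠ 0) (h₁ : ‖l₁ * r‖ < 1) (h₁' : ‖l₁ / r‖ < 1) (h₂ : ‖l₂ * r‖ < 1)
    (h₂' : ‖l₂ / r‖ < 1)
    (hD : ∀ β : ℤ, D β = if β = 0 then (c₀ + a₁ / l₁ + a₂ / l₂) / p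
      else if β.natAbs = 1 then (c₁ + a₁ + a₂) / p
      else (a₁ * l₁ ^ (β.natAbs - 1) + a₂ * l₂ ^ (β.natAbs - 1)) / p) :
    HasSum (fun γ => D γ * r ^ γ) ((c₀ + c₁ * (r + r⁻¹)
      + a₁ / l₁ * ((1 - l₁ ^ 2) / ((1 - l₁ * r) * (1 - l₁ / r)))
      + a₂ / l₂ * ((1 - l₂ ^ 2) / ((1 - l₂ * r) * (1 - l₂ / r)))) / p) := by
  have hlocal : HasSum (fun γ : ℤ => if γ = 0 then c₀ else if γ.natAbs = 1 then c₁ * r ^ γ else 0)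
      (c₀ + c₁ * (r + r⁻¹)) := by
    have hfin : HasSum _ _ := hasSum_sum_of_ne_finset_zero (s := {0, 1, -1})
      (f := fun γ : ℤ => if γ = 0 then c₀ else if γ.natAbs = 1 then c₁ * r ^ γ else 0)
      fun γ hγ => by
        simp only [Finset.mem_insert, Finset.mem_singleton, not_or] at hγ
        rw [if_neg hγ.1, if_neg (by omega)]
    convert hfin using 1
    simp
    ring
  refine (((hlocal.add ((hasSum_pow_natAbs_mul_zpow hr h₁ h₁').mul_left (a₁ / l₁))).add
    ((hasSum_pow_natAbs_mul_zpow hr h₂ h₂').mul_left (a₂ / l₂))).div_const p).congr_fun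
    fun γ => ?_
  rw [hD]
  split_ifs with h0 h1
  · subst h0
    simp
  · rw [h1]
    field_simp
  · obtain ⟨k, hk⟩ : ∃ k, γ.natAbs = k + 1 := ⟨γ.natAbs - 1, by omega⟩
    rw [hk, Nat.add_sub_cancel]
    field_simp
    ring

end Series

theorem kernel_coeff_mul_geometric_eq {K : Type*} [Field K] {E p l m A : K} (hp : p ≠ 0)
    (hE : E ≠ 0) (hl : l ≠ 0) (hm : m ≠ 0) (hlm : l ≠ m) (hll : l * l ≠ 1) (hlm₁ : l * m ≠ 1)
    (hlE : l * E ≠ 1) (hlE' : l * E⁻¹ ≠ 1)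
    (hA : A = 2 * (1 - l) ^ 4 * (l * (E ^ 2 + 1) - E * (l ^ 2 + 1)) * p
      / (l * (p * (l - l⁻¹) * (l - m) * (l - m⁻¹)))) :
    A / l * ((1 - l ^ 2) / ((1 - l * E⁻¹) * (1 - l / E⁻¹)))
      = 2 * E * (1 - l) ^ 4 * m / (l * (l - m) * (l * m - 1)) := by
  have h₁ : l ^ 2 - 1 ≠ 0 := by rw [sq]; exact sub_ne_zero.2 hll
  have h₂ : l * m - 1 ≠ 0 := sub_ne_zero.2 hlm₁
  have h₃ : 1 - l * E ≠ 0 := sub_ne_zero.2 hlE.symm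
  have h₄ : E - l ≠ 0 := fun h => hlE' (by rw [← sub_eq_zero.1 h, mul_inv_cancel₀ hE])
  have h₅ : l - m ≠ 0 := sub_ne_zero.2 hlm
  rw [hA]
  field_simp
  ring

theorem abs_mul_lt_one_of_abs_lt_inv {l E x : ℝ} (hl : |l| < E⁻¹) (hx : |x| ≤ E) :
    |l * x| < 1 := by
  have hE : 0 < E := inv_pos.1 ((abs_nonneg l).trans_lt hl)
  calc |l * x| = |l| * |x| := abs_mul l x
    _ ≤ |l| * E := mul_le_mul_of_nonneg_left hx (abs_nonneg l)
    _ < E⁻¹ * E := mul_lt_mul_of_pos_right hl hE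
    _ = 1 := inv_mul_cancel₀ hE.ne'

theorem hasSum_kernel_mul_inv_zpow_eq_zero {E p l₁ l₂ A₁ A₂ C : ℝ} {D : ℤ → ℝ} (hp : p ≠ 0)
    (hE : 1 < E) (hl₁ : l₁ ≠ 0) (hl₂ : l₂ ≠ 0) (h₁₂ : l₁ ≠ l₂) (hl₁E : |l₁| < E⁻¹)
    (hl₂E : |l₂| < E⁻¹)
    (hA₁ : A₁ = 2 * (1 - l₁) ^ 4 * (l₁ * (E ^ 2 + 1) - E * (l₁ ^ 2 + 1)) * p
      / (l₁ * (p * (l₁ - l₁⁻¹) * (l₁ - l₂) * (l₁ - l₂⁻¹))))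
    (hA₂ : A₂ = 2 * (1 - l₂) ^ 4 * (l₂ * (E ^ 2 + 1) - E * (l₂ ^ 2 + 1)) * p
      / (l₂ * (p * (l₂ - l₂⁻¹) * (l₂ - l₁) * (l₂ - l₁⁻¹))))
    (hC : C = 1 + 4 * E + E ^ 2 - E * (l₁ + l₁⁻¹ + l₂ + l₂⁻¹))
    (hD : ∀ β : ℤ, D β = if β = 0 then (2 * C + A₁ / l₁ + A₂ / l₂) / p
      else if β.natAbs = 1 then (-2 * E + A₁ + A₂) / p
      else (A₁ * l₁ ^ (β.natAbs - 1) + A₂ * l₂ ^ (β.natAbs - 1)) / p) :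
    HasSum (fun γ => D γ * E⁻¹ ^ γ) 0 := by
  have hE₀ : 0 < E := one_pos.trans hE
  have hE_le : |E| ≤ E := (abs_of_pos hE₀).le
  have hEinv_le : |E⁻¹| ≤ E := by
    rw [abs_of_pos (inv_pos.2 hE₀)]; exact (inv_lt_one_of_one_lt₀ hE).le.trans hE.le
  have hl₁_le : |l₁| ≤ E := hl₁E.le.trans ((le_abs_self _).trans hEinv_le)
  have hl₂_le : |l₂| ≤ E := hl₂E.le.trans ((le_abs_self _).trans hEinv_le)
  have hne {l x : ℝ} (hl : |l| < E⁻¹) (hx : |x| ≤ E) : l * x ≠ 1 :=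
    (abs_lt.1 (abs_mul_lt_one_of_abs_lt_inv hl hx)).2.ne
  have hsum := hasSum_kernel_mul_zpow hl₁ hl₂ (inv_ne_zero hE₀.ne')
    (abs_mul_lt_one_of_abs_lt_inv hl₁E hEinv_le)
    (by rw [div_inv_eq_mul]; exact abs_mul_lt_one_of_abs_lt_inv hl₁E hE_le)
    (abs_mul_lt_one_of_abs_lt_inv hl₂E hEinv_le)
    (by rw [div_inv_eq_mul]; exact abs_mul_lt_one_of_abs_lt_inv hl₂E hE_le) hD
  refine (congrArg (HasSum _) ?_).mp hsum
  rw [kernel_coeff_mul_geometric_eq hp hE₀.ne' hl₁ hl₂ h₁₂ (hne hl₁E hl₁_le) (hne hl₁E hl₂_le)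
      (hne hl₁E hE_le) (hne hl₁E hEinv_le) hA₁,
    kernel_coeff_mul_geometric_eq hp hE₀.ne' hl₂ hl₁ h₁₂.symm (hne hl₂E hl₂_le)
      (hne hl₂E hl₁_le) (hne hl₂E hE_le) (hne hl₂E hEinv_le) hA₂, hC]
  have h₁₂' : l₁ - l₂ ≠ 0 := sub_ne_zero.2 h₁₂
  have h₂₁' : l₂ - l₁ ≠ 0 := sub_ne_zero.2 h₁₂.symm
  have hprod : l₁ * l₂ - 1 ≠ 0 := sub_ne_zero.2 (hne hl₁E hl₂_le)
  have hprod' : l₂ * l₁ - 1 ≠ 0 := sub_ne_zero.2 (hne hl₂E hl₁_le)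
  field_simp
  ring

theorem D3_conv_exp_general (h p p3 lam1 lam2 A1 A2 C : ℝ) (D3 : ℤ → ℝ)
    (hh : 0 < h)
    (hp : p = (1 - Real.exp (2 * h)) + 2 * Real.exp h * (h + h ^ 3 / 6))
    (hp3 : p3 = iteratedDeriv 3 (P4 h) 0 / 6)
    (hpne : p ≠ 0)
    (hne : lam1 ≠ lam2)
    (hroot1 : P4 h lam1 = 0) (hroot2 : P4 h lam2 = 0)
    (hlam1_0 : 0 < |lam1|) (hlam1_1 : |lam1| < Real.exp (-h))
    (hlam2_0 : 0 < |lam2|) (hlam2_1 : |lam2| < Real.exp (-h))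
    (hA1 : A1 = 2 * (1 - lam1) ^ 4 *
        (lam1 * (Real.exp (2 * h) + 1) - Real.exp h * (lam1 ^ 2 + 1)) * p
        / (lam1 * deriv (P4 h) lam1))
    (hA2 : A2 = 2 * (1 - lam2) ^ 4 *
        (lam2 * (Real.exp (2 * h) + 1) - Real.exp h * (lam2 ^ 2 + 1)) * p
        / (lam2 * deriv (P4 h) lam2))
    (hC : C = 1 + 4 * Real.exp h + Real.exp (2 * h) + Real.exp h * p3 / p)
    (hD : ∀ β : ℤ, D3 β =
      if β = 0 then (2 * C + A1 / lam1 + A2 / lam2) / p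
      else if β.natAbs = 1 then (-2 * Real.exp h + A1 + A2) / p
      else (A1 * lam1 ^ (β.natAbs - 1) + A2 * lam2 ^ (β.natAbs - 1)) / p)
    (β : ℤ) :
    HasSum (fun γ : ℤ => D3 γ * Real.exp (h * ((β : ℝ) - (γ : ℝ)))) 0 := by
  set E := Real.exp h
  have hE : 1 < E := Real.one_lt_exp_iff.2 hh
  have hE₂ : Real.exp (2 * h) = E ^ 2 := by rw [sq, ← Real.exp_add, two_mul]
  have hl₁ : lam1 ≠ 0 := abs_pos.1 hlam1_0
  have hl₂ : lam2 ≠ 0 := abs_pos.1 hlam2_0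
  have hl₁E : |lam1| < E⁻¹ := by rwa [← Real.exp_neg]
  have hl₂E : |lam2| < E⁻¹ := by rwa [← Real.exp_neg]
  have hprod : lam1 * lam2 ≠ 1 := (abs_lt.1 (abs_mul_lt_one_of_abs_lt_inv hl₁E
    (hl₂E.le.trans ((inv_lt_one_of_one_lt₀ hE).le.trans hE.le)))).2.ne
  have hfac₁ := P4_eq_mul hp hl₁ hl₂ (add_inv_ne_add_inv hl₁ hl₂ hne hprod) hroot1 hroot2
  have hfac₂ := P4_eq_mul hp hl₂ hl₁ (add_inv_ne_add_inv hl₁ hl₂ hne hprod).symm hroot2 hroot1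
  have hsum := hasSum_kernel_mul_inv_zpow_eq_zero hpne hE hl₁ hl₂ hne hl₁E hl₂E
    (by rw [hA1, hfac₁, deriv_quartic_at_root, hE₂])
    (by rw [hA2, hfac₂, deriv_quartic_at_root, hE₂])
    (by rw [hC, hp3, hfac₁, iteratedDeriv_three_quartic, hE₂]; field_simp; ring) hD
  refine (mul_zero (Real.exp (h * β)) ▸ hsum.mul_left (Real.exp (h * β))).congr_fun fun γ => ?_
  rw [mul_sub, Real.exp_sub, Real.exp_mul h γ, Real.rpow_intCast, inv_zpow]
  ring

/-- For every integer `β`, the series `∑_{γ ∈ ℤ} D_3(γ) e^{h(β-γ)}` converges and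
equals `0`: the discrete convolution of `D_3` with `β ↦ e^{hβ}` is identically zero. -/
theorem D3_conv_exp (h p p3 lam1 lam2 A1 A2 C : ℝ) (D3 : ℤ → ℝ)
    (hh : 0 < h)
    (hp : p = (1 - Real.exp (2 * h)) + 2 * Real.exp h * (h + h ^ 3 / 6))
    (hp3 : p3 = iteratedDeriv 3 (P4 h) 0 / 6)
    (hpne : p ≠ 0)
    (hne : lam1 ≠ lam2)
    (hroot1 : P4 h lam1 = 0) (hroot2 : P4 h lam2 = 0)
    (hlam1_0 : 0 < |lam1|) (hlam1_1 : |lam1| < Real.exp (-h))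
    (hlam2_0 : 0 < |lam2|) (hlam2_1 : |lam2| < Real.exp (-h))
    (hder1 : deriv (P4 h) lam1 ≠ 0) (hder2 : deriv (P4 h) lam2 ≠ 0)
    (hinv1 : P4 h (1 / lam1) = 0) (hinv2 : P4 h (1 / lam2) = 0)
    (hA1 : A1 = 2 * (1 - lam1) ^ 4 *
        (lam1 * (Real.exp (2 * h) + 1) - Real.exp h * (lam1 ^ 2 + 1)) * p
        / (lam1 * deriv (P4 h) lam1))
    (hA2 : A2 = 2 * (1 - lam2) ^ 4 *
        (lam2 * (Real.exp (2 * h) + 1) - Real.exp h * (lam2 ^ 2 + 1)) * p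
        / (lam2 * deriv (P4 h) lam2))
    (hC : C = 1 + 4 * Real.exp h + Real.exp (2 * h) + Real.exp h * p3 / p)
    (hD : ∀ β : ℤ, D3 β =
      if β = 0 then (2 * C + A1 / lam1 + A2 / lam2) / p
      else if β.natAbs = 1 then (-2 * Real.exp h + A1 + A2) / p
      else (A1 * lam1 ^ (β.natAbs - 1) + A2 * lam2 ^ (β.natAbs - 1)) / p)
    (β : ℤ) :
    HasSum (fun γ : ℤ => D3 γ * Real.exp (h * ((β : ℝ) - (γ : ℝ)))) 0 :=
  D3_conv_exp_general h p p3 lam1 lam2 A1 A2 C D3 hh hp hp3 hpne hne hroot1 hroot2 hlam1_0 hlam1_1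
    hlam2_0 hlam2_1 hA1 hA2 hC hD β
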